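/- Let μ be a probability measure on ℝ with compact support, let λ, φ > 0, δ > 0, let U ⊆ ℂ be open, and let S : U → ℂ be holomorphic with |λφ + S(z) f| ≥ δ for all z ∈ U and all f ∈ supp(μ). Suppose that for every z ∈ U the effective bulk equation 1 + z S(z) = φ ∫ S(z) f/(λφ + S(z) f) dμ(f) holds. Then for every z ∈ U with S′(z) ≠ 0, one has z + S(z)/S′(z) = λ φ² ∫ f/(λφ + S(z) f)² dμ(f). -/

import Mathlib

/-! Writing `c = λφ`, the identity `S f/(c + S f) = 1 - c/(c + S f)` turns the bulk equation
into `1 + z S(z) = φ - λφ² ∫ (c + S(z) f)⁻¹ dμ(f)`. On the compact support of `μ` the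
integrand's `z`-derivative `-S'(z) f/(c + S(z) f)²` is bounded locally uniformly in `z`, thanks
to `δ`, so the right side may be differentiated under the integral sign. Comparing derivatives
gives `S + z S' = λφ² S' ∫ f/(c + S f)² dμ`; divide by `S'`. -/

open MeasureTheory Complex

/-- The topological support of a measure: the set of points all of whose open
neighborhoods have nonzero measure. -/
def measSupport {α : Type*} [TopologicalSpace α] [MeasurableSpace α]
    (μ : Measure α) : Set α :=
  {x | ∀ U : Set α, IsOpen U → x ∈ U → μ U ≠ 0}

theorem measSupport_eq_support {α : Type*} [TopologicalSpace α] [MeasurableSpace α]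
    (μ : Measure α) : measSupport μ = μ.support := by
  ext x
  simp only [measSupport, Measure.support_eq_forall_isOpen, Set.mem_ofPred_eq, pos_iff_ne_zero]
  exact forall_congr' fun _ => Imp.swap

theorem ae_mem_measSupport {α : Type*} [TopologicalSpace α] [HereditarilyLindelofSpace α]
    [MeasurableSpace α] (μ : Measure α) : ∀ᵐ x ∂μ, x ∈ measSupport μ := by
  rw [measSupport_eq_support]
  exact Measure.support_mem_ae

theorem integrable_inv_of_le_norm {α : Type*} [MeasurableSpace α] {μ : Measure α}
    [IsFiniteMeasure μ] {g : α → ℂ} (hg : AEMeasurable g μ) {δ : ℝ} (hδ : 0 < δ)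
    (hgδ : ∀ᵐ x ∂μ, δ ≤ ‖g x‖) : Integrable (fun x => (g x)⁻¹) μ := by
  refine (integrable_const δ⁻¹).mono' hg.inv.aestronglyMeasurable ?_
  filter_upwards [hgδ] with x hx
  rw [norm_inv]
  exact inv_anti₀ hδ hx

theorem integral_div_const_add {α : Type*} [MeasurableSpace α] {μ : Measure α}
    [IsProbabilityMeasure μ] {g : α → ℂ} {c : ℂ} (hne : ∀ᵐ x ∂μ, c + g x ≠ 0)
    (hint : Integrable (fun x => (c + g x)⁻¹) μ) :
    ∫ x, g x / (c + g x) ∂μ = 1 - c * ∫ x, (c + g x)⁻¹ ∂μ := by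
  calc ∫ x, g x / (c + g x) ∂μ = ∫ x, (1 - c * (c + g x)⁻¹) ∂μ := by
        refine integral_congr_ae ?_
        filter_upwards [hne] with x hx
        field_simp
        ring
    _ = 1 - c * ∫ x, (c + g x)⁻¹ ∂μ := by
        rw [integral_sub (integrable_const 1) (hint.const_mul c), integral_const_mul]
        simp

theorem hasDerivAt_integral_inv_const_add_mul {μ : Measure ℝ} [IsFiniteMeasure μ]
    {K : Set ℝ} (hK : Bornology.IsBounded K) (hμK : ∀ᵐ f ∂μ, f ∈ K) {c : ℂ} {δ : ℝ}
    (hδ : 0 < δ) {U : Set ℂ} (hU : IsOpen U) {S : ℂ → ℂ} (hS : DifferentiableOn ℂ S U)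
    (hδS : ∀ w ∈ U, ∀ f ∈ K, δ ≤ ‖c + S w * f‖) {z : ℂ} (hz : z ∈ U) :
    HasDerivAt (fun w => ∫ f, (c + S w * f)⁻¹ ∂μ)
      (-deriv S z * ∫ f, (f : ℂ) / (c + S z * f) ^ 2 ∂μ) z := by
  obtain ⟨M, hM⟩ := hK.exists_norm_le
  obtain ⟨B, hBz, hBU, hB⟩ := local_compact_nhds (hU.mem_nhds hz)
  obtain ⟨C, hC⟩ := hB.exists_bound_of_continuousOn
    ((hS.analyticOnNhd hU).deriv.continuousOn.mono hBU)
  have hne : ∀ w ∈ U, ∀ f ∈ K, c + S w * f ≠ 0 := fun w hw f hf =>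
    norm_pos_iff.mp (hδ.trans_le (hδS w hw f hf))
  have hint : Integrable (fun f : ℝ => (c + S z * f)⁻¹) μ :=
    integrable_inv_of_le_norm (by fun_prop) hδ (hμK.mono fun f hf => hδS z hz f hf)
  have hbound : ∀ᵐ f : ℝ ∂μ, ∀ w ∈ B,
      ‖-(deriv S w * f) / (c + S w * f) ^ 2‖ ≤ C * M / δ ^ 2 := by
    filter_upwards [hμK] with f hf w hw
    rw [norm_div, norm_neg, norm_mul, norm_pow, Complex.norm_real]
    have hC0 : 0 ≤ C := (norm_nonneg _).trans (hC w hw)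
    have hM0 : 0 ≤ M := (norm_nonneg _).trans (hM f hf)
    exact div_le_div₀ (by positivity) (mul_le_mul (hC w hw) (hM f hf) (norm_nonneg _) hC0)
      (by positivity) (pow_le_pow_left₀ hδ.le (hδS w (hBU hw) f hf) 2)
  have hderiv : ∀ᵐ f : ℝ ∂μ, ∀ w ∈ B,
      HasDerivAt (fun y => (c + S y * f)⁻¹) (-(deriv S w * f) / (c + S w * f) ^ 2) w := by
    filter_upwards [hμK] with f hf w hw
    have hSw := (hS.differentiableAt (hU.mem_nhds (hBU hw))).hasDerivAt
    exact ((hSw.mul_const (f : ℂ)).const_add c).inv (hne w (hBU hw) f hf)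
  have hmeas' : Measurable fun f : ℝ => -(deriv S z * f) / (c + S z * f) ^ 2 := by fun_prop
  have h := (hasDerivAt_integral_of_dominated_loc_of_deriv_le
    (F := fun w (f : ℝ) => (c + S w * f)⁻¹) hBz (.of_forall fun w => by fun_prop) hint
    hmeas'.aestronglyMeasurable hbound (integrable_const _) hderiv).2
  refine h.congr_deriv ?_
  rw [← integral_const_mul]
  congr 1 with f
  ring

theorem effective_bulk_derivative_identity_general
    (μ : Measure ℝ) [IsProbabilityMeasure μ]
    (hcpt : IsCompact (measSupport μ))
    (lam φ δ : ℝ) (hδ : 0 < δ)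
    (U : Set ℂ) (hU : IsOpen U) (S : ℂ → ℂ)
    (hS : DifferentiableOn ℂ S U)
    (hδS : ∀ z ∈ U, ∀ f ∈ measSupport μ, δ ≤ ‖(lam : ℂ) * (φ : ℂ) + S z * f‖)
    (heq : ∀ z ∈ U, 1 + z * S z
      = (φ : ℂ) * ∫ f : ℝ, S z * f / ((lam : ℂ) * (φ : ℂ) + S z * f) ∂μ) :
    ∀ z ∈ U, deriv S z ≠ 0 →
      z + S z / deriv S z
        = (lam : ℂ) * (φ : ℂ) ^ 2
            * ∫ f : ℝ, (f : ℂ) / ((lam : ℂ) * (φ : ℂ) + S z * f) ^ 2 ∂μ := by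
  intro z hz hS'
  set c : ℂ := lam * φ
  set G : ℂ → ℂ := fun w => ∫ f : ℝ, (c + S w * f)⁻¹ ∂μ
  have hae := ae_mem_measSupport μ
  have hbulk : ∀ w ∈ U, 1 + w * S w = φ - lam * φ ^ 2 * G w := by
    intro w hw
    have hδw : ∀ᵐ f : ℝ ∂μ, δ ≤ ‖c + S w * f‖ := hae.mono (hδS w hw)
    have hne : ∀ᵐ f : ℝ ∂μ, c + S w * f ≠ 0 :=
      hδw.mono fun f hf => norm_pos_iff.mp (hδ.trans_le hf)
    rw [heq w hw, integral_div_const_add hne (integrable_inv_of_le_norm (by fun_prop) hδ hδw)]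
    ring
  have hLHS : HasDerivAt (fun w => 1 + w * S w) (S z + z * deriv S z) z := by
    simpa using ((hasDerivAt_id z).mul
      (hS.differentiableAt (hU.mem_nhds hz)).hasDerivAt).const_add 1
  have hG := hasDerivAt_integral_inv_const_add_mul hcpt.isBounded hae hδ hU hS hδS hz
  have hRHS := (hG.const_mul (lam * φ ^ 2 : ℂ)).const_sub (φ : ℂ)
  have hderiv_eq := hLHS.unique (hRHS.congr_of_eventuallyEq
    (Filter.eventually_of_mem (hU.mem_nhds hz) hbulk))
  field_simp
  linear_combination hderiv_eq

/-- Differentiating the effective bulk equation: if `S` is holomorphic on an open `U`,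
`|λφ + S(z)f| ≥ δ` on the support of `μ`, and `1 + z S(z) = φ ∫ S(z)f/(λφ + S(z)f) dμ(f)`
on `U`, then wherever `S'(z) ≠ 0`,
`z + S(z)/S'(z) = λ φ² ∫ f/(λφ + S(z)f)² dμ(f)`. -/
theorem effective_bulk_derivative_identity
    (μ : Measure ℝ) [IsProbabilityMeasure μ]
    (hcpt : IsCompact (measSupport μ))
    (lam φ δ : ℝ) (hlam : 0 < lam) (hφ : 0 < φ) (hδ : 0 < δ)
    (U : Set ℂ) (hU : IsOpen U) (S : ℂ → ℂ)
    (hS : DifferentiableOn ℂ S U)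
    (hδS : ∀ z ∈ U, ∀ f ∈ measSupport μ, δ ≤ ‖(lam : ℂ) * (φ : ℂ) + S z * f‖)
    (heq : ∀ z ∈ U, 1 + z * S z
      = (φ : ℂ) * ∫ f : ℝ, S z * f / ((lam : ℂ) * (φ : ℂ) + S z * f) ∂μ) :
    ∀ z ∈ U, deriv S z ≠ 0 →
      z + S z / deriv S z
        = (lam : ℂ) * (φ : ℂ) ^ 2
            * ∫ f : ℝ, (f : ℂ) / ((lam : ℂ) * (φ : ℂ) + S z * f) ^ 2 ∂μ :=
  effective_bulk_derivative_identity_general μ hcpt lam φ δ hδ U hU S hS hδS heq
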